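/- The graphs C_{c,ℓ} (closure of the complete ℓ-ary tree of height c) contain no path on n vertices as a subgraph for any n ≥ 2^{c+1}. Equivalently, the longest path in C_{c,ℓ} has fewer than 2^{c+1} vertices. -/

import Mathlib

open SimpleGraph

universe u

/-- The graph obtained from `ℓ` vertex-disjoint copies of `G` by adding one dominant
vertex (`none`) adjacent to all other vertices. -/
def addDomCopies {V : Type u} (G : SimpleGraph V) (ℓ : ℕ) :
    SimpleGraph (Option (Fin ℓ × V)) where
  Adj x y :=
    match x, y with
    | none, none => False
    | none, some _ => True
    | some _, none => True
    | some p, some q => p.1 = q.1 ∧ G.Adj p.2 q.2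
  symm := by
    refine ⟨?_⟩
    rintro (_ | p) (_ | q) h
    · exact h
    · trivial
    · trivial
    · exact ⟨h.1.symm, h.2.symm⟩
  loopless := by
    refine ⟨?_⟩
    rintro (_ | p) h
    · exact h
    · exact G.irrefl h.2

/-- Vertex type of the graph `C_{c,ℓ}`. -/
def CV (ℓ : ℕ) : ℕ → Type
  | 0 => Fin 1
  | c + 1 => Option (Fin ℓ × CV ℓ c)

/-- The graphs `C_{c,ℓ}`: `C_{0,ℓ}` is a single vertex, `C_{1,ℓ} = K_{1,ℓ}`, and
`C_{c,ℓ}` is obtained from `ℓ` disjoint copies of `C_{c−1,ℓ}` by adding one dominant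
vertex; equivalently the closure of the complete `ℓ`-ary tree of height `c`. -/
def Cfam (ℓ : ℕ) : (c : ℕ) → SimpleGraph (CV ℓ c)
  | 0 => ⊥
  | c + 1 => addDomCopies (Cfam ℓ c) ℓ

/-! A path through the dominant vertex splits there into two paths, each of which is the
dominant vertex followed by a path inside one copy of `G`; so adding a dominant vertex to
disjoint copies at most doubles the number of vertices of a longest path. -/

def PathsShorterThan {V : Type u} (G : SimpleGraph V) (m : ℕ) : Prop :=
  ∀ (a b : V) (q : G.Walk a b), q.IsPath → q.support.length < m

namespace addDomCopies

variable {V : Type u} {G : SimpleGraph V} {ℓ m : ℕ}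

lemma exists_walk_of_none_notMem_support {x w : Option (Fin ℓ × V)}
    (p : (addDomCopies G ℓ).Walk x w) (hnone : none ∉ p.support) {i : Fin ℓ} {a : V}
    (hx : x = some (i, a)) :
    ∃ (b : V) (q : G.Walk a b), p.support = q.support.map (fun y => some (i, y)) := by
  induction p generalizing a with
  | nil => exact ⟨a, .nil, by simp [hx]⟩
  | @cons _ v _ h p ih =>
    subst hx
    rw [Walk.support_cons, List.mem_cons, not_or] at hnone
    obtain _ | ⟨j, a'⟩ := v
    · exact absurd p.start_mem_support hnone.2
    obtain rfl : i = j := h.1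
    obtain ⟨b, q, hq⟩ := ih hnone.2 rfl
    exact ⟨b, .cons h.2 q, by rw [Walk.support_cons, hq, Walk.support_cons, List.map_cons]⟩

lemma support_length_lt_of_none_notMem (hG : PathsShorterThan G m) {x y : Option (Fin ℓ × V)}
    {p : (addDomCopies G ℓ).Walk x y} (hp : p.IsPath) (hnone : none ∉ p.support) :
    p.support.length < m := by
  obtain _ | ⟨i, a⟩ := x
  · exact absurd p.start_mem_support hnone
  obtain ⟨b, q, hsupp⟩ := exists_walk_of_none_notMem_support p hnone rfl
  have hq : q.IsPath := .mk' ((hsupp ▸ hp.support_nodup).of_map _)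
  simpa [hsupp] using hG a b q hq

lemma length_lt_of_start_none (hG : PathsShorterThan G m) (hm : 0 < m)
    {y : Option (Fin ℓ × V)} (p : (addDomCopies G ℓ).Walk none y) (hp : p.IsPath) :
    p.length < m := by
  cases p with
  | nil => exact hm
  | cons h p =>
    rw [Walk.cons_isPath_iff] at hp
    have := support_length_lt_of_none_notMem hG hp.1 hp.2
    rw [Walk.length_support] at this
    exact Walk.length_cons h p ▸ this

lemma pathsShorterThan (hG : PathsShorterThan G m) (hm : 0 < m) :
    PathsShorterThan (addDomCopies G ℓ) (2 * m) := by
  classical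
  intro x y p hp
  by_cases hnone : none ∈ p.support
  · have hbefore := length_lt_of_start_none hG hm _ (hp.takeUntil hnone).reverse
    have hafter := length_lt_of_start_none hG hm _ (hp.dropUntil hnone)
    have hsplit := congrArg Walk.length (p.take_spec hnone)
    rw [Walk.length_reverse] at hbefore
    rw [Walk.length_append] at hsplit
    rw [Walk.length_support]
    omega
  · exact (support_length_lt_of_none_notMem hG hp hnone).trans_le (by omega)

end addDomCopies

lemma Cfam_pathsShorterThan (ℓ : ℕ) : ∀ c, PathsShorterThan (Cfam ℓ c) (2 ^ (c + 1))
  | 0 => by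
    rintro a b (_ | ⟨h, _⟩) -
    · simp
    · exact absurd h (by simp [Cfam])
  | c + 1 => by
    rw [pow_succ', Cfam]
    exact addDomCopies.pathsShorterThan (Cfam_pathsShorterThan ℓ c) (by positivity)

/-- `C_{c,ℓ}` contains no path on `n` vertices for `n ≥ 2^(c+1)`; equivalently, every
path in `C_{c,ℓ}` has fewer than `2^(c+1)` vertices. -/
theorem stmt_10 (c ℓ : ℕ) (u v : CV ℓ c) (p : (Cfam ℓ c).Walk u v) (hp : p.IsPath) :
    p.support.length < 2 ^ (c + 1) :=
  Cfam_pathsShorterThan ℓ c u v p hp
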